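/- Let h > 1 and 0 < κ < h, and let a > 0, A ≥ 0, c ≥ 0 be real numbers. Let N : ℝ → ℝ be a nondecreasing nonnegative function such that: (i) for every t ≥ 1 and every ε with e^{−a·t} ≤ ε ≤ 1 one has |N(t) − N(t − ε) − c·(1 − e^{−h·ε})·e^{h·t}| ≤ A·(1 − e^{−h·ε})·e^{(h−κ)·t}; and (ii) N(((h−1)/h)·t) ≤ A·e^{(h−1)·t} for every t ≥ 1. Then there exist κ′ > 0 and A′ ≥ 0, depending only on h, κ, a, A and c, such that |N(t) − c·e^{h·t}| ≤ A′·e^{(h−κ′)·t} for all t ≥ 1. -/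
import Mathlib


/-- From a shell-counting estimate valid for shells of width `ε ≥ e^{-a t}`,
together with a trivial bound for the count up to time `((h-1)/h) t`, one
deduces an effective asymptotic `N(t) = c e^{h t} + O(e^{(h - κ') t})`. -/
theorem effective_count_from_shell_estimate
    (h κ a A c : ℝ) (hh : 1 < h) (hκ0 : 0 < κ) (hκh : κ < h)
    (ha : 0 < a) (hA : 0 ≤ A) (hc : 0 ≤ c)
    (N : ℝ → ℝ) (hmono : Monotone N) (hnonneg : ∀ t, 0 ≤ N t)
    (hshell : ∀ t : ℝ, 1 ≤ t → ∀ ε : ℝ, Real.exp (-a * t) ≤ ε → ε ≤ 1 →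
      |N t - N (t - ε) - c * (1 - Real.exp (-h * ε)) * Real.exp (h * t)| ≤
        A * (1 - Real.exp (-h * ε)) * Real.exp ((h - κ) * t))
    (htriv : ∀ t : ℝ, 1 ≤ t →
      N (((h - 1) / h) * t) ≤ A * Real.exp ((h - 1) * t)) :
    ∃ κ' : ℝ, 0 < κ' ∧ ∃ A' : ℝ, 0 ≤ A' ∧ ∀ t : ℝ, 1 ≤ t →
      |N t - c * Real.exp (h * t)| ≤ A' * Real.exp ((h - κ') * t) := by
  have hh0 : (0:ℝ) < h := by linarith
  have hd : 0 < h - κ := by linarith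
  have hden : 0 < 1 - Real.exp (-(h - κ)) := by
    have : Real.exp (-(h - κ)) < 1 := Real.exp_lt_one_iff.mpr (by linarith)
    linarith
  set C := A / (1 - Real.exp (-(h - κ))) with hCdef
  have hC0 : 0 ≤ C := div_nonneg hA hden.le
  have hCA : C * (1 - Real.exp (-(h - κ))) = A := by
    rw [hCdef, div_mul_cancel₀ _ hden.ne']
  set B := (A + c) * Real.exp (2 * h) with hBdef
  have hB0 : 0 ≤ B := mul_nonneg (by linarith) (Real.exp_pos _).le
  -- bound on N 2 from the trivial estimate
  have hN2 : N 2 ≤ A * Real.exp (2 * h) := by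
    have hs1 : (1:ℝ) ≤ 2 * h / (h - 1) := by
      rw [le_div_iff₀ (by linarith)]; linarith
    have htr := htriv (2 * h / (h - 1)) hs1
    have hne : h ≠ 0 := ne_of_gt hh0
    have hne1 : h - 1 ≠ 0 := by intro hcon; linarith [sub_eq_zero.mp hcon]
    have e1 : ((h - 1) / h) * (2 * h / (h - 1)) = 2 := by
      field_simp
    have e2 : (h - 1) * (2 * h / (h - 1)) = 2 * h := by
      field_simp
    rw [e1, e2] at htr
    exact htr
  have key : ∀ n : ℕ, ∀ t : ℝ, 1 ≤ t → t ≤ (n : ℝ) + 2 →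
      |N t - c * Real.exp (h * t)| ≤ B + C * Real.exp ((h - κ) * t) := by
    intro n
    induction n with
    | zero =>
      intro t ht1 ht2
      push_cast at ht2
      have hNt : N t ≤ A * Real.exp (2 * h) :=
        le_trans (hmono (by linarith)) hN2
      have hexp : Real.exp (h * t) ≤ Real.exp (2 * h) :=
        Real.exp_le_exp.mpr (by nlinarith)
      have hnn := hnonneg t
      have hce : 0 ≤ c * Real.exp (h * t) := mul_nonneg hc (Real.exp_pos _).le
      have hc2 : c * Real.exp (h * t) ≤ c * Real.exp (2 * h) :=
        mul_le_mul_of_nonneg_left hexp hc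
      have hc3 : 0 ≤ c * Real.exp (2 * h) := mul_nonneg hc (Real.exp_pos _).le
      have habs : |N t - c * Real.exp (h * t)| ≤ B := by
        rw [hBdef, abs_le]
        constructor <;> nlinarith
      have hCp : 0 ≤ C * Real.exp ((h - κ) * t) :=
        mul_nonneg hC0 (Real.exp_pos _).le
      linarith
    | succ n ih =>
      intro t ht1 ht2
      push_cast at ht2
      by_cases hcase : t ≤ (n : ℝ) + 2
      · exact ih t ht1 hcase
      push_neg at hcase
      have hn0 : (0:ℝ) ≤ (n : ℝ) := Nat.cast_nonneg n
      have ht1' : 1 ≤ t - 1 := by linarith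
      have hprev := ih (t - 1) ht1' (by linarith)
      have heps1 : Real.exp (-a * t) ≤ 1 :=
        Real.exp_le_one_iff.mpr (by nlinarith)
      have hsh := hshell t (by linarith) 1 heps1 le_rfl
      rw [mul_one] at hsh
      -- algebraic identity
      have hexpid : Real.exp (h * (t - 1)) = Real.exp (h * t) * Real.exp (-h) := by
        rw [← Real.exp_add]; ring_nf
      have hid : N t - c * Real.exp (h * t)
          = (N t - N (t - 1) - c * (1 - Real.exp (-h)) * Real.exp (h * t))
            + (N (t - 1) - c * Real.exp (h * (t - 1))) := by
        rw [hexpid]; ring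
      have hsplit := abs_add_le
        (N t - N (t - 1) - c * (1 - Real.exp (-h)) * Real.exp (h * t))
        (N (t - 1) - c * Real.exp (h * (t - 1)))
      rw [← hid] at hsplit
      have hX : A * (1 - Real.exp (-h)) * Real.exp ((h - κ) * t)
          ≤ A * Real.exp ((h - κ) * t) := by
        have h1 : 1 - Real.exp (-h) ≤ 1 := by
          have := (Real.exp_pos (-h)).le; linarith
        have h2 : A * (1 - Real.exp (-h)) ≤ A := mul_le_of_le_one_right hA h1
        exact mul_le_mul_of_nonneg_right h2 (Real.exp_pos _).le
      have hexpid2 : Real.exp ((h - κ) * (t - 1))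
          = Real.exp ((h - κ) * t) * Real.exp (-(h - κ)) := by
        rw [← Real.exp_add]; ring_nf
      have hgoal : A * Real.exp ((h - κ) * t) + C * Real.exp ((h - κ) * (t - 1))
          ≤ C * Real.exp ((h - κ) * t) := by
        rw [hexpid2]
        nlinarith [Real.exp_pos ((h - κ) * t), hCA]
      calc |N t - c * Real.exp (h * t)|
          ≤ |N t - N (t - 1) - c * (1 - Real.exp (-h)) * Real.exp (h * t)|
            + |N (t - 1) - c * Real.exp (h * (t - 1))| := hsplit
        _ ≤ A * (1 - Real.exp (-h)) * Real.exp ((h - κ) * t)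
            + (B + C * Real.exp ((h - κ) * (t - 1))) := add_le_add hsh hprev
        _ ≤ B + C * Real.exp ((h - κ) * t) := by
            have := hX; linarith [hgoal]
  refine ⟨κ, hκ0, B + C, by linarith, ?_⟩
  intro t ht
  obtain ⟨n, hn⟩ := exists_nat_ge t
  have hk := key n t ht (by push_cast; linarith)
  have h1 : (1:ℝ) ≤ Real.exp ((h - κ) * t) :=
    Real.one_le_exp (by positivity)
  calc |N t - c * Real.exp (h * t)| ≤ B + C * Real.exp ((h - κ) * t) := hk
    _ ≤ (B + C) * Real.exp ((h - κ) * t) := by nlinarith [hB0, h1]
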